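/- Let 0 < r < 1/2 and a0 ≥ 0 be real numbers with 2a0 + 2r < 1, and set t0 = r^2(1 - 4a0^2) - 2r^4 and t1 = (1 - 4r^2)a0 - a0^2. Then the cubic f̃(w) = 2r^3 w^3 + 3r^2(1 + 2a0) w^2 + r(3 + 8a0 + 4a0^2 + 4a0 r^2 - 6r^2) w + (6a0 + 2a0^2 - 4r^2 - 12a0 r^2 + 8a0^2 r^2 + 2r^4 + 1 + t0 - 2t1) has exactly one real root, and this root is negative. -/
import Mathlib


noncomputable section

/-- The cubic `f̃` locating the double points of the spectral curve, with
`t0 = r²(1 - 4a0²) - 2r⁴` and `t1 = (1 - 4r²)a0 - a0²` substituted in terms of `(r, a0)`. -/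
def ftilde (r a0 w : ℝ) : ℝ :=
  2*r^3*w^3 + 3*r^2*(1 + 2*a0)*w^2 + r*(3 + 8*a0 + 4*a0^2 + 4*a0*r^2 - 6*r^2)*w
    + (6*a0 + 2*a0^2 - 4*r^2 - 12*a0*r^2 + 8*a0^2*r^2 + 2*r^4 + 1
        + (r^2*(1 - 4*a0^2) - 2*r^4) - 2*((1 - 4*r^2)*a0 - a0^2))

/-- For `0 < r < 1/2`, `a0 ≥ 0` and `2a0 + 2r < 1`, the cubic `f̃` has exactly one
real root, and this root is negative. -/
theorem ftilde_unique_negative_root (r a0 : ℝ)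
    (hr0 : 0 < r) (hr1 : r < 1/2) (ha : 0 ≤ a0) (hsum : 2*a0 + 2*r < 1) :
    ∃ w : ℝ, ftilde r a0 w = 0 ∧ w < 0 ∧ ∀ w' : ℝ, ftilde r a0 w' = 0 → w' = w := by
  have hrne : r ≠ 0 := ne_of_gt hr0
  -- key factorization: 4r² f̃(w) = u (r²u² + r²D), u = 2rw + (1+2a0),
  -- D = 3 + 4a0 - 4a0² + 8a0r² - 12r²
  have key : ∀ w : ℝ, 4*r^2 * ftilde r a0 w =
      (2*r*w + (1 + 2*a0)) *
        ((r*(2*r*w + (1 + 2*a0)))^2 + r^2*(3 + 4*a0 - 4*a0^2 + 8*a0*r^2 - 12*r^2)) := by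
    intro w; unfold ftilde; ring
  have hD : 0 < 3 + 4*a0 - 4*a0^2 + 8*a0*r^2 - 12*r^2 := by nlinarith [sq_nonneg r, sq_nonneg a0]
  have hquad : ∀ w : ℝ,
      0 < (r*(2*r*w + (1 + 2*a0)))^2 + r^2*(3 + 4*a0 - 4*a0^2 + 8*a0*r^2 - 12*r^2) := by
    intro w
    have h1 := sq_nonneg (r*(2*r*w + (1 + 2*a0)))
    have h2 : 0 < r^2*(3 + 4*a0 - 4*a0^2 + 8*a0*r^2 - 12*r^2) := mul_pos (by positivity) hD
    linarith
  refine ⟨-(1 + 2*a0)/(2*r), ?_, ?_, ?_⟩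
  · have h := key (-(1 + 2*a0)/(2*r))
    have hu : 2*r*(-(1 + 2*a0)/(2*r)) + (1 + 2*a0) = 0 := by field_simp; ring
    rw [hu] at h
    have : 4*r^2 * ftilde r a0 (-(1 + 2*a0)/(2*r)) = 0 := by rw [h]; ring
    have h4 : (4:ℝ)*r^2 ≠ 0 := by positivity
    exact (mul_eq_zero.mp this).resolve_left h4
  · apply div_neg_of_neg_of_pos <;> [skip; linarith]
    linarith
  · intro w' hw'
    have h := key w'
    rw [hw', mul_zero] at h
    have hu : 2*r*w' + (1 + 2*a0) = 0 := by
      rcases mul_eq_zero.mp h.symm with h1 | h1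
      · exact h1
      · exact absurd h1 (ne_of_gt (hquad w'))
    field_simp
    linarith
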